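/- Let R be a graded ring with R_0 = k a perfect field of characteristic p > 0. If R has enough Hasse derivations, then R is reduced. -/

import Mathlib

/-!
The nilradical of a graded ring is homogeneous, so it suffices to show that a homogeneous
nilpotent `x` of degree `n` vanishes; we induct on `n`. In degree `0`, `x` is a nilpotent
scalar. If `x` lies in the `k`-span of the `p`-th powers, perfectness of `k` makes it a `p`-th
power `y ^ p`, and comparing degrees gives `x = y_{n/p} ^ p` with `y_{n/p}` nilpotent of smaller
degree. Otherwise some homogeneous Hasse derivation of negative degree has `∂¹x ≠ 0`; but `∂¹x`
is nilpotent of smaller degree, hence zero.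
-/

/-- A Hasse derivation on a `k`-algebra `R`. -/
structure HasseDerivation (k R : Type*) [CommRing k] [CommRing R] [Algebra k R] where
  d : ℕ → R →ₗ[k] R
  d_zero : d 0 = LinearMap.id
  leibniz : ∀ (n : ℕ) (x y : R),
    d n (x * y) = ∑ ij ∈ Finset.HasAntidiagonal.antidiagonal n, d ij.1 x * d ij.2 y

/-- A Hasse derivation is homogeneous of negative degree `-e` (with `e > 0`) if
`∂^n` shifts degrees by `-n*e`. -/
def HasseDerivation.IsHomogeneousNeg {k R : Type*} [CommRing k] [CommRing R] [Algebra k R]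
    (𝒜 : ℕ → Submodule k R) (D : HasseDerivation k R) (e : ℕ) : Prop :=
  0 < e ∧ ∀ (n m : ℕ) (y : R), y ∈ 𝒜 m →
    (if n * e ≤ m then D.d n y ∈ 𝒜 (m - n * e) else D.d n y = 0)

/-- `R` has enough Hasse derivations: every homogeneous element of positive degree not
lying in the `k`-span of the `p`-th powers is not killed by `∂¹` for some homogeneous
Hasse derivation of negative degree. -/
def HasEnoughHasseDerivations {k R : Type*} [CommRing k] [CommRing R] [Algebra k R]
    (𝒜 : ℕ → Submodule k R) (p : ℕ) : Prop :=
  ∀ (x : R) (n : ℕ), 0 < n → x ∈ 𝒜 n →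
    x ∉ Submodule.span k {y : R | ∃ r : R, y = r ^ p} →
    ∃ (D : HasseDerivation k R) (e : ℕ), D.IsHomogeneousNeg 𝒜 e ∧ D.d 1 x ≠ 0

open PowerSeries in
theorem PowerSeries.isNilpotent_coeff {R : Type*} [CommRing R] {f : R⟦X⟧}
    (hf : IsNilpotent f) (n : ℕ) : IsNilpotent (coeff n f) := by
  induction n generalizing f with
  | zero => simpa using hf.map constantCoeff
  | succ n ih =>
    have hshift : IsNilpotent (X * mk fun i => coeff (i + 1) f) := by
      rw [eq_sub_of_add_eq (eq_X_mul_shift_add_const f).symm]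
      exact (Commute.all _ _).isNilpotent_sub hf ((hf.map constantCoeff).map C)
    have hX : X ∈ nonZeroDivisorsLeft R⟦X⟧ := fun g hg => X_mul_cancel (by rw [hg, mul_zero])
    simpa using ih (((Commute.all _ _).isNilpotent_mul_left_iff hX).mp hshift)

namespace HasseDerivation

variable {k R : Type*} [CommRing k] [CommRing R] [Algebra k R] (D : HasseDerivation k R)

def toPowerSeries (x : R) : PowerSeries R := PowerSeries.mk fun n => D.d n x

lemma toPowerSeries_mul (x y : R) :
    D.toPowerSeries (x * y) = D.toPowerSeries x * D.toPowerSeries y := by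
  ext n
  simp [toPowerSeries, PowerSeries.coeff_mul, D.leibniz]

lemma toPowerSeries_pow_succ (x : R) (m : ℕ) :
    D.toPowerSeries (x ^ (m + 1)) = D.toPowerSeries x ^ (m + 1) := by
  induction m with
  | zero => simp
  | succ m ih => rw [pow_succ _ (m + 1), D.toPowerSeries_mul, ih, ← pow_succ]

/-- `x ↦ ∑ ∂ⁿ(x) tⁿ` is multiplicative, hence maps nilpotents to nilpotents. -/
lemma isNilpotent_d {x : R} (hx : IsNilpotent x) (n : ℕ) : IsNilpotent (D.d n x) := by
  obtain ⟨m, hm⟩ := hx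
  have hseries : IsNilpotent (D.toPowerSeries x) := by
    refine ⟨m + 1, ?_⟩
    rw [← toPowerSeries_pow_succ, pow_succ, hm, zero_mul]
    ext n
    simp [toPowerSeries]
  simpa [toPowerSeries] using PowerSeries.isNilpotent_coeff hseries n

variable {D} in
lemma IsHomogeneousNeg.exists_lt_d_one_mem {𝒜 : ℕ → Submodule k R} {e : ℕ}
    (hD : D.IsHomogeneousNeg 𝒜 e) {x : R} {n : ℕ} (hx : x ∈ 𝒜 n) (h : D.d 1 x ≠ 0) :
    ∃ m < n, D.d 1 x ∈ 𝒜 m := by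
  obtain ⟨he, hdeg⟩ := hD
  have hx1 := hdeg 1 n x hx
  rw [one_mul] at hx1
  split_ifs at hx1 with hen
  · exact ⟨n - e, by omega, hx1⟩
  · exact absurd hx1 h

end HasseDerivation

theorem mem_span_setOf_pow_iff {k R : Type*} [CommSemiring k] [CommSemiring R] [Algebra k R]
    (p : ℕ) [ExpChar k p] [PerfectRing k p] [ExpChar R p] {x : R} :
    x ∈ Submodule.span k {y : R | ∃ r : R, y = r ^ p} ↔ ∃ r : R, x = r ^ p := by
  refine ⟨fun hx => ?_, fun hx => Submodule.subset_span hx⟩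
  induction hx using Submodule.span_induction with
  | mem y hy => exact hy
  | zero => exact ⟨0, (zero_pow (expChar_pos R p).ne').symm⟩
  | add y z _ _ hy hz =>
    obtain ⟨a, rfl⟩ := hy
    obtain ⟨b, rfl⟩ := hz
    exact ⟨a + b, (add_pow_expChar a b p).symm⟩
  | smul c y _ hy =>
    obtain ⟨a, rfl⟩ := hy
    exact ⟨(frobeniusEquiv k p).symm c • a, by rw [smul_pow, frobeniusEquiv_symm_pow_p]⟩

open DirectSum in
theorem coe_decompose_pow_expChar {R σ : Type*} [CommRing R] [SetLike σ R]
    [AddSubmonoidClass σ R] (𝒜 : ℕ → σ) [GradedRing 𝒜] (p : ℕ) [ExpChar R p]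
    (y : R) (n : ℕ) :
    (decompose 𝒜 (y ^ p) n : R) = if p ∣ n then (decompose 𝒜 y (n / p) : R) ^ p else 0 := by
  classical
  have hp : 0 < p := expChar_pos R p
  have hterm (j : ℕ) : (decompose 𝒜 ((decompose 𝒜 y j : R) ^ p) n : R) =
      if p * j = n then (decompose 𝒜 y j : R) ^ p else 0 := by
    have hmem : (decompose 𝒜 y j : R) ^ p ∈ 𝒜 (p * j) := by
      simpa using SetLike.pow_mem_graded p (decompose 𝒜 y j).2
    split_ifs with h
    · exact decompose_of_mem_same 𝒜 (h ▸ hmem)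
    · exact decompose_of_mem_ne 𝒜 hmem h
  conv_lhs => rw [← sum_support_decompose 𝒜 y, sum_pow_char, decompose_sum,
    DFinsupp.finsetSum_apply, AddSubmonoidClass.coe_finsetSum]
  simp only [hterm]
  split_ifs with hdvd
  · obtain ⟨d, rfl⟩ := hdvd
    simp only [Nat.mul_left_cancel_iff hp, Finset.sum_ite_eq',
      DFinsupp.mem_support_iff, ne_eq, ite_not]
    rw [Nat.mul_div_cancel_left d hp]
    split_ifs with h
    · rw [h, ZeroMemClass.coe_zero, zero_pow hp.ne']
    · rfl
  · exact Finset.sum_eq_zero fun j _ => if_neg fun h => hdvd ⟨j, h.symm⟩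

open DirectSum in
theorem GradedRing.isReduced_of_forall_homogeneous {ι σ A : Type*} [CommRing A] [AddCommMonoid ι]
    [LinearOrder ι] [IsOrderedCancelAddMonoid ι] [SetLike σ A] [AddSubmonoidClass σ A]
    (𝒜 : ι → σ) [GradedRing 𝒜] (h : ∀ i, ∀ x ∈ 𝒜 i, IsNilpotent x → x = 0) :
    IsReduced A := by
  classical
  refine ⟨fun x hx => ?_⟩
  have hcomp (i : ι) : (decompose 𝒜 x i : A) = 0 :=
    h i _ (decompose 𝒜 x i).2 <| mem_nilradical.mp <|
      (Ideal.IsHomogeneous.bot 𝒜).radical i (mem_nilradical.mpr hx)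
  rw [← sum_support_decompose 𝒜 x]
  exact Finset.sum_eq_zero fun i _ => hcomp i

theorem HasEnoughHasseDerivations.eq_zero_of_isNilpotent {k R : Type*} [Field k] [CommRing R]
    [Algebra k R] {p : ℕ} [Fact p.Prime] [ExpChar k p] [PerfectRing k p] [ExpChar R p]
    {𝒜 : ℕ → Submodule k R} [GradedAlgebra 𝒜] (hEH : HasEnoughHasseDerivations 𝒜 p)
    (h0 : ∀ x ∈ 𝒜 0, ∃ c : k, algebraMap k R c = x) (n : ℕ) {x : R} (hx : x ∈ 𝒜 n)
    (hnil : IsNilpotent x) : x = 0 := by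
  nontriviality R
  induction n using Nat.strong_induction_on generalizing x with
  | _ n IH =>
  rcases Nat.eq_zero_or_pos n with rfl | hn
  · obtain ⟨c, rfl⟩ := h0 x hx
    rw [IsNilpotent.map_iff (algebraMap k R).injective] at hnil
    rw [hnil.eq_zero, map_zero]
  by_cases hspan : x ∈ Submodule.span k {y : R | ∃ r : R, y = r ^ p}
  · obtain ⟨y, rfl⟩ := (mem_span_setOf_pow_iff p).mp hspan
    have hcomp := coe_decompose_pow_expChar 𝒜 p y n
    rw [DirectSum.decompose_of_mem_same 𝒜 hx] at hcomp
    rw [hcomp] at hnil ⊢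
    split_ifs at hnil ⊢ with hdvd
    · have hlt : n / p < n := Nat.div_lt_self hn (Fact.out : p.Prime).one_lt
      rw [IH (n / p) hlt (SetLike.coe_mem _) hnil.of_pow, zero_pow (expChar_pos R p).ne']
    · rfl
  · obtain ⟨D, e, hD, hD1⟩ := hEH x n hn hx hspan
    obtain ⟨m, hm, hmem⟩ := hD.exists_lt_d_one_mem hx hD1
    exact absurd (IH m hm hmem (D.isNilpotent_d hnil 1)) hD1

theorem stmt5
    {k R : Type*} [Field k] [PerfectField k] [CommRing R] [Algebra k R]
    (p : ℕ) [hp : Fact p.Prime] [CharP k p]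
    (𝒜 : ℕ → Submodule k R) [GradedAlgebra 𝒜]
    (h0 : ∀ x ∈ 𝒜 0, ∃ c : k, algebraMap k R c = x)
    (hEH : HasEnoughHasseDerivations 𝒜 p) :
    IsReduced R := by
  nontriviality R
  have : ExpChar R p := expChar_of_injective_algebraMap (algebraMap k R).injective p
  exact GradedRing.isReduced_of_forall_homogeneous 𝒜 fun n _ hx =>
    hEH.eq_zero_of_isNilpotent h0 n hx
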